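/- arXiv:2510.11510 — 2 statements merged into one kernel-verified Lean document; each statement's English description precedes it below -/
import Mathlib

section
/- For an n×n invertible matrix A over a field, the k×k minor of A on rows j₁<...<jₖ and columns i₁<...<iₖ equals det(A)·(-1)^{Σiₚ+Σjq} times the (n-k)×(n-k) minor of A⁻¹ on the complementary rows (complement of {i₁,...,iₖ}) and complementary columns (complement of {j₁,...,jₖ}). -/
open Matrix Equiv Equiv.Perm Finset

section Block
variable {α β K : Type*} [Fintype α] [Fintype β] [DecidableEq α] [DecidableEq β]
  [CommRing K]

lemma jacobi_block (M N : Matrix (α ⊕ β) (α ⊕ β) K) (h1 : M * N = 1) :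
    det (M.toBlocks₁₁) = det M * det (N.toBlocks₂₂) := by
  have hM := fromBlocks_toBlocks M
  have hN := fromBlocks_toBlocks N
  have hone : (1 : Matrix (α ⊕ β) (α ⊕ β) K) = fromBlocks 1 0 0 1 := fromBlocks_one.symm
  rw [← hM, ← hN, fromBlocks_multiply, hone] at h1
  have hb12 : Matrix.toBlocks₁₂ (1 : Matrix (α ⊕ β) (α ⊕ β) K) = 0 := by
    ext i j; simp [Matrix.toBlocks₁₂, Matrix.one_apply]
  have hb22 : Matrix.toBlocks₂₂ (1 : Matrix (α ⊕ β) (α ⊕ β) K) = 1 := by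
    ext i j; simp [Matrix.toBlocks₂₂, Matrix.one_apply, Sum.inr.injEq]
  have h12 : M.toBlocks₁₁ * N.toBlocks₁₂ + M.toBlocks₁₂ * N.toBlocks₂₂ = 0 := by
    have := congrArg Matrix.toBlocks₁₂ h1
    simpa [hb12, Matrix.toBlocks_fromBlocks₁₂] using this
  have h22 : M.toBlocks₂₁ * N.toBlocks₁₂ + M.toBlocks₂₂ * N.toBlocks₂₂ = 1 := by
    have := congrArg Matrix.toBlocks₂₂ h1
    simpa [hb22, Matrix.toBlocks_fromBlocks₂₂] using this
  have key : M * fromBlocks 1 N.toBlocks₁₂ 0 N.toBlocks₂₂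
      = fromBlocks M.toBlocks₁₁ 0 M.toBlocks₂₁ 1 := by
    conv_lhs => rw [← hM]
    rw [fromBlocks_multiply]
    simp only [Matrix.mul_one, Matrix.mul_zero, add_zero, zero_add, h12, h22]
  have := congrArg det key
  rw [det_mul, det_fromBlocks_zero₂₁, det_fromBlocks_zero₁₂] at this
  simpa using this.symm

end Block


section SignSec
variable {n : ℕ}

noncomputable def eqvOf (S : Finset (Fin n)) {k m : ℕ} (hS : S.card = k) (hS' : Sᶜ.card = m) :
    (Fin k ⊕ Fin m) ≃ Fin n :=
  Equiv.ofBijective (Sum.elim (S.orderEmbOfFin hS) (Sᶜ.orderEmbOfFin hS'))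
    (by
      rw [Fintype.bijective_iff_injective_and_card]
      constructor
      · intro x y hxy
        rcases x with a | a <;> rcases y with b | b <;> simp only [Sum.elim_inl, Sum.elim_inr] at hxy
        · exact congrArg Sum.inl ((S.orderEmbOfFin hS).injective hxy)
        · exfalso
          have h1 := Finset.orderEmbOfFin_mem S hS a
          have h2 := Finset.orderEmbOfFin_mem Sᶜ hS' b
          rw [← hxy] at h2
          exact (Finset.mem_compl.mp h2) h1
        · exfalso
          have h1 := Finset.orderEmbOfFin_mem S hS b
          have h2 := Finset.orderEmbOfFin_mem Sᶜ hS' a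
          rw [hxy] at h2
          exact (Finset.mem_compl.mp h2) h1
        · exact congrArg Sum.inr ((Sᶜ.orderEmbOfFin hS').injective hxy)
      · simp only [Fintype.card_sum, Fintype.card_fin]
        rw [← hS, ← hS', Finset.card_add_card_compl, Fintype.card_fin])

@[simp] lemma eqvOf_inl (S : Finset (Fin n)) {k m : ℕ} (hS : S.card = k) (hS' : Sᶜ.card = m)
    (s : Fin k) : eqvOf S hS hS' (Sum.inl s) = S.orderEmbOfFin hS s := rfl

@[simp] lemma eqvOf_inr (S : Finset (Fin n)) {k m : ℕ} (hS : S.card = k) (hS' : Sᶜ.card = m)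
    (t : Fin m) : eqvOf S hS hS' (Sum.inr t) = Sᶜ.orderEmbOfFin hS' t := rfl

noncomputable def permOf (S : Finset (Fin n)) {k m : ℕ} (hS : S.card = k) (hS' : Sᶜ.card = m)
    (h : k + m = n) : Equiv.Perm (Fin n) :=
  (finSumFinEquiv.trans (finCongr h)).symm.trans (eqvOf S hS hS')

end SignSec

lemma eqvOf_initial {n k m : ℕ} (h : k + m = n) (S : Finset (Fin n)) (hS : S.card = k)
    (hS' : Sᶜ.card = m) (hinit : ∀ j ∈ S, (j : ℕ) < k) :
    eqvOf S hS hS' = finSumFinEquiv.trans (finCongr h) := by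
  have hk : k ≤ n := by omega
  have hSeq : S = Finset.image (Fin.castLE hk) Finset.univ := by
    apply Finset.eq_of_subset_of_card_le
    · intro j hj
      refine Finset.mem_image.mpr ⟨⟨(j : ℕ), hinit j hj⟩, Finset.mem_univ _, ?_⟩
      ext; rfl
    · rw [Finset.card_image_of_injective _ (Fin.castLE_injective hk), Finset.card_univ,
        Fintype.card_fin, hS]
  have hemb : (fun s : Fin k => Fin.castLE hk s) = S.orderEmbOfFin hS := by
    apply Finset.orderEmbOfFin_unique
    · intro x
      rw [hSeq]
      exact Finset.mem_image.mpr ⟨x, Finset.mem_univ _, rfl⟩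
    · intro a b hab
      simpa only [Fin.lt_def, Fin.coe_castLE] using hab
  have hembc : (fun t : Fin m => (⟨k + (t : ℕ), by omega⟩ : Fin n)) = Sᶜ.orderEmbOfFin hS' := by
    apply Finset.orderEmbOfFin_unique
    · intro x
      rw [Finset.mem_compl]
      intro hx
      have := hinit _ hx
      simp only [] at this
      omega
    · intro a b hab
      simp only [Fin.lt_def] at *
      omega
  ext y
  rcases y with s | t
  · have h1 : eqvOf S hS hS' (Sum.inl s) = S.orderEmbOfFin hS s := rfl
    rw [h1, ← congrFun hemb s]
    simp
  · have h1 : eqvOf S hS hS' (Sum.inr t) = Sᶜ.orderEmbOfFin hS' t := rfl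
    rw [h1, ← congrFun hembc t]
    simp

set_option maxHeartbeats 2000000 in
lemma eqvOf_swap {n k m : ℕ} (S : Finset (Fin n)) (hS : S.card = k) (hS' : Sᶜ.card = m)
    (p : ℕ) (hp : p + 1 < n) (ha : (⟨p, by omega⟩ : Fin n) ∉ S)
    (hb : (⟨p + 1, hp⟩ : Fin n) ∈ S)
    (hS2 : (insert (⟨p, by omega⟩ : Fin n) (S.erase ⟨p + 1, hp⟩)).card = k)
    (hS2' : (insert (⟨p, by omega⟩ : Fin n) (S.erase ⟨p + 1, hp⟩))ᶜ.card = m) :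
    eqvOf S hS hS' =
      (eqvOf (insert (⟨p, by omega⟩ : Fin n) (S.erase ⟨p + 1, hp⟩)) hS2 hS2').trans
        (Equiv.swap (⟨p, by omega⟩ : Fin n) ⟨p + 1, hp⟩) := by
  set a : Fin n := ⟨p, by omega⟩ with ha_def
  set b : Fin n := ⟨p + 1, hp⟩ with hb_def
  set S' : Finset (Fin n) := insert a (S.erase b) with hS'_def
  have hab : a ≠ b := by simp [ha_def, hb_def, Fin.ext_iff]
  have haS' : a ∈ S' := Finset.mem_insert_self _ _
  have hbS' : b ∉ S' := by
    simp only [hS'_def, Finset.mem_insert]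
    rintro (h | h)
    · exact hab h.symm
    · exact (Finset.mem_erase.mp h).1 rfl
  -- membership transfer
  have hmem : ∀ x ∈ S', x ≠ a → x ∈ S := fun x hx hxa => by
    rcases Finset.mem_insert.mp hx with h | h
    · exact absurd h hxa
    · exact Finset.mem_of_mem_erase h
  have hmemc : ∀ x : Fin n, x ∉ S' → x ≠ b → x ∉ S := fun x hx hxb hxS => by
    apply hx
    exact Finset.mem_insert.mpr (Or.inr (Finset.mem_erase.mpr ⟨hxb, hxS⟩))
  -- rows: S.orderEmbOfFin = swap ∘ S'.orderEmbOfFin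
  have hrow : (fun s : Fin k => Equiv.swap a b (S'.orderEmbOfFin hS2 s)) = S.orderEmbOfFin hS := by
    apply Finset.orderEmbOfFin_unique
    · intro x
      set y := S'.orderEmbOfFin hS2 x with hy
      have hyS' : y ∈ S' := Finset.orderEmbOfFin_mem _ _ _
      by_cases hya : y = a
      · rw [hya, Equiv.swap_apply_left]; exact hb
      · have hyb : y ≠ b := fun h => hbS' (h ▸ hyS')
        rw [Equiv.swap_apply_of_ne_of_ne hya hyb]
        exact hmem y hyS' hya
    · intro s t hst
      have hmono := (S'.orderEmbOfFin hS2).strictMono hst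
      set x := S'.orderEmbOfFin hS2 s
      set y := S'.orderEmbOfFin hS2 t
      have hxS' : x ∈ S' := Finset.orderEmbOfFin_mem _ _ _
      have hyS' : y ∈ S' := Finset.orderEmbOfFin_mem _ _ _
      have hxb : x ≠ b := fun h => hbS' (h ▸ hxS')
      have hyb : y ≠ b := fun h => hbS' (h ▸ hyS')
      show Equiv.swap a b x < Equiv.swap a b y
      by_cases hxa : x = a
      · have hya : y ≠ a := fun h => absurd (h ▸ hmono) (by simp [hxa])
        rw [hxa, Equiv.swap_apply_left, Equiv.swap_apply_of_ne_of_ne hya hyb]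
        -- y > a, y ≠ b ⇒ y > b
        have h1 : (a : ℕ) < (y : ℕ) := by rw [← hxa]; exact hmono
        have h2 : (y : ℕ) ≠ p + 1 := fun h => hyb (Fin.ext h)
        simp only [Fin.lt_def, ha_def, hb_def] at *
        omega
      · by_cases hya : y = a
        · rw [hya, Equiv.swap_apply_left, Equiv.swap_apply_of_ne_of_ne hxa hxb]
          have h1 : (x : ℕ) < (a : ℕ) := by rw [← hya]; exact hmono
          simp only [Fin.lt_def, ha_def, hb_def] at *
          omega
        · rw [Equiv.swap_apply_of_ne_of_ne hxa hxb, Equiv.swap_apply_of_ne_of_ne hya hyb]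
          exact hmono
  -- columns: Sᶜ.orderEmbOfFin = swap ∘ S'ᶜ.orderEmbOfFin
  have hcol : (fun t : Fin m => Equiv.swap a b (S'ᶜ.orderEmbOfFin hS2' t)) = Sᶜ.orderEmbOfFin hS' := by
    apply Finset.orderEmbOfFin_unique
    · intro x
      set y := S'ᶜ.orderEmbOfFin hS2' x with hy
      have hyc : y ∈ S'ᶜ := Finset.orderEmbOfFin_mem _ _ _
      have hyS' : y ∉ S' := Finset.mem_compl.mp hyc
      by_cases hyb : y = b
      · rw [hyb, Equiv.swap_apply_right]
        exact Finset.mem_compl.mpr ha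
      · have hya : y ≠ a := fun h => hyS' (h ▸ haS')
        rw [Equiv.swap_apply_of_ne_of_ne hya hyb]
        exact Finset.mem_compl.mpr (hmemc y hyS' hyb)
    · intro s t hst
      have hmono := (S'ᶜ.orderEmbOfFin hS2').strictMono hst
      set x := S'ᶜ.orderEmbOfFin hS2' s
      set y := S'ᶜ.orderEmbOfFin hS2' t
      have hxS' : x ∉ S' := Finset.mem_compl.mp (Finset.orderEmbOfFin_mem _ _ _)
      have hyS' : y ∉ S' := Finset.mem_compl.mp (Finset.orderEmbOfFin_mem _ _ _)
      have hxa : x ≠ a := fun h => hxS' (h ▸ haS')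
      have hya : y ≠ a := fun h => hyS' (h ▸ haS')
      show Equiv.swap a b x < Equiv.swap a b y
      by_cases hxb : x = b
      · have hyb : y ≠ b := fun h => absurd (h ▸ hmono) (by simp [hxb])
        rw [hxb, Equiv.swap_apply_right, Equiv.swap_apply_of_ne_of_ne hya hyb]
        have h1 : (b : ℕ) < (y : ℕ) := by rw [← hxb]; exact hmono
        simp only [Fin.lt_def, ha_def, hb_def] at *
        omega
      · by_cases hyb : y = b
        · rw [hyb, Equiv.swap_apply_right, Equiv.swap_apply_of_ne_of_ne hxa hxb]
          have h1 : (x : ℕ) < (b : ℕ) := by rw [← hyb]; exact hmono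
          have h2 : (x : ℕ) ≠ p := fun h => hxa (Fin.ext h)
          simp only [Fin.lt_def, ha_def, hb_def] at *
          omega
        · rw [Equiv.swap_apply_of_ne_of_ne hxa hxb, Equiv.swap_apply_of_ne_of_ne hya hyb]
          exact hmono
  ext y
  rcases y with s | t
  · have h1 : eqvOf S hS hS' (Sum.inl s) = S.orderEmbOfFin hS s := rfl
    have h2 : eqvOf S' hS2 hS2' (Sum.inl s) = S'.orderEmbOfFin hS2 s := rfl
    rw [Equiv.trans_apply, h1, h2, ← congrFun hrow s]
  · have h1 : eqvOf S hS hS' (Sum.inr t) = Sᶜ.orderEmbOfFin hS' t := rfl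
    have h2 : eqvOf S' hS2 hS2' (Sum.inr t) = S'ᶜ.orderEmbOfFin hS2' t := rfl
    rw [Equiv.trans_apply, h1, h2, ← congrFun hcol t]

lemma sign_permOf {n k m : ℕ} (h : k + m = n) :
    ∀ N : ℕ, ∀ (S : Finset (Fin n)) (hS : S.card = k) (hS' : Sᶜ.card = m),
      (∑ j ∈ S, (j : ℕ)) = N →
      Equiv.Perm.sign (permOf S hS hS' h) = (-1) ^ N * (-1) ^ (k * (k - 1) / 2) := by
  intro N
  induction N using Nat.strong_induction_on with
  | _ N IH =>
    intro S hS hS' hsum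
    by_cases hinit : ∀ j ∈ S, (j : ℕ) < k
    · -- base case : S is the initial segment
      have hk : k ≤ n := by omega
      have hSeq : S = Finset.image (Fin.castLE hk) Finset.univ := by
        apply Finset.eq_of_subset_of_card_le
        · intro j hj
          refine Finset.mem_image.mpr ⟨⟨(j : ℕ), hinit j hj⟩, Finset.mem_univ _, ?_⟩
          ext; rfl
        · rw [Finset.card_image_of_injective _ (Fin.castLE_injective hk), Finset.card_univ,
            Fintype.card_fin, hS]
      have hNval : N = k * (k - 1) / 2 := by
        rw [← hsum, hSeq, Finset.sum_image (fun a _ b _ hab => Fin.castLE_injective hk hab)]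
        simp only [Fin.coe_castLE]
        rw [Fin.sum_univ_eq_sum_range (fun i => i) k, Finset.sum_range_id]
      have hperm : permOf S hS hS' h = Equiv.refl (Fin n) := by
        rw [permOf, eqvOf_initial h S hS hS' hinit]
        exact Equiv.symm_trans_self _
      rw [hperm, Equiv.Perm.sign_refl, hNval, ← pow_add]
      exact (Even.neg_one_pow ⟨_, rfl⟩).symm
    · -- inductive step
      have hdesc : ∃ p : ℕ, ∃ hp : p + 1 < n,
          (⟨p, by omega⟩ : Fin n) ∉ S ∧ (⟨p + 1, hp⟩ : Fin n) ∈ S := by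
        by_contra hcon
        push_neg at hcon
        apply hinit
        -- downward closedness
        have hdc : ∀ q : ℕ, ∀ hq : q < n, (⟨q, hq⟩ : Fin n) ∈ S →
            ∀ r : ℕ, ∀ _hr : r ≤ q, (⟨r, by omega⟩ : Fin n) ∈ S := by
          intro q
          induction q with
          | zero =>
            intro hq hmem r hr
            have : r = 0 := by omega
            subst this; exact hmem
          | succ q IHq =>
            intro hq hmem r hr
            rcases Nat.eq_or_lt_of_le hr with heq | hlt
            · subst heq; exact hmem
            · have hq' : q < n := by omega
              have hqS : (⟨q, hq'⟩ : Fin n) ∈ S := by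
                by_contra hqn
                exact (hcon q hq hqn) hmem
              exact IHq hq' hqS r (by omega)
        intro j hj
        by_contra hjk
        push_neg at hjk
        have hsub : Finset.Iic j ⊆ S := by
          intro i hi
          have hle0 := Finset.mem_Iic.mp hi
          have hle : (i : ℕ) ≤ (j : ℕ) := hle0
          have := hdc (j : ℕ) j.isLt (by simpa using hj) (i : ℕ) hle
          simpa using this
        have hcard := Finset.card_le_card hsub
        rw [Fin.card_Iic, hS] at hcard
        omega
      obtain ⟨p, hp, ha, hb⟩ := hdesc
      set a : Fin n := ⟨p, by omega⟩ with ha_def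
      set b : Fin n := ⟨p + 1, hp⟩ with hb_def
      have hab : a ≠ b := by simp [ha_def, hb_def, Fin.ext_iff]
      have han : a ∉ S.erase b := fun hx => ha (Finset.mem_of_mem_erase hx)
      have hkpos : 1 ≤ k := by
        rw [← hS]; exact Finset.card_pos.mpr ⟨b, hb⟩
      have hS2 : (insert a (S.erase b)).card = k := by
        rw [Finset.card_insert_of_notMem han, Finset.card_erase_of_mem hb, hS]
        omega
      have hS2' : (insert a (S.erase b))ᶜ.card = m := by
        rw [Finset.card_compl, hS2, Fintype.card_fin]
        rw [Finset.card_compl, hS, Fintype.card_fin] at hS'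
        exact hS'
      have hsum1 : ∑ j ∈ S.erase b, (j : ℕ) + (p + 1) = N := by
        rw [← hsum]; exact Finset.sum_erase_add S _ hb
      have hsum2 : ∑ j ∈ insert a (S.erase b), (j : ℕ) = ∑ j ∈ S.erase b, (j : ℕ) + p := by
        rw [Finset.sum_insert han]; exact Nat.add_comm _ _
      have hperm : permOf S hS hS' h =
          (permOf (insert a (S.erase b)) hS2 hS2' h).trans (Equiv.swap a b) := by
        rw [permOf, permOf, eqvOf_swap S hS hS' p hp ha hb hS2 hS2', ← Equiv.trans_assoc]
      obtain ⟨N', rfl⟩ : ∃ N', N = N' + 1 := ⟨N - 1, by omega⟩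
      rw [hperm, Equiv.Perm.sign_trans, Equiv.Perm.sign_swap hab,
        IH N' (by omega) _ hS2 hS2' (by omega), pow_succ,
        ← mul_assoc, mul_comm (-1 : ℤˣ) ((-1 : ℤˣ) ^ N')]

/-- Jacobi identity: the k×k minor of an invertible n×n matrix A on rows R and columns C
equals det A times (-1)^(sum of selected row and column indices, 1-indexed) times the
(n-k)×(n-k) minor of A⁻¹ on the complementary rows Cᶜ and complementary columns Rᶜ. -/
theorem stmt1 (n k : ℕ) (A : Matrix (Fin n) (Fin n) ℂ) (hA : IsUnit A)
    (R C : Finset (Fin n)) (hR : R.card = k) (hC : C.card = k) :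
    Matrix.det (Matrix.of fun s t : Fin k =>
        A (R.orderEmbOfFin hR s) (C.orderEmbOfFin hC t))
      = A.det * (-1 : ℂ) ^ (∑ i ∈ C, ((i : ℕ) + 1) + ∑ j ∈ R, ((j : ℕ) + 1)) *
        Matrix.det (Matrix.of fun s t : Fin (n - k) =>
          A⁻¹ (Cᶜ.orderEmbOfFin (by rw [Finset.card_compl, hC, Fintype.card_fin]) s)
              (Rᶜ.orderEmbOfFin (by rw [Finset.card_compl, hR, Fintype.card_fin]) t)) := by
  have hk : k ≤ n := by
    rw [← hR]
    simpa using Finset.card_le_univ R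
  have hkm : k + (n - k) = n := by omega
  have hRc : Rᶜ.card = n - k := by rw [Finset.card_compl, hR, Fintype.card_fin]
  have hCc : Cᶜ.card = n - k := by rw [Finset.card_compl, hC, Fintype.card_fin]
  set eR := eqvOf R hR hRc with heR
  set eC := eqvOf C hC hCc with heC
  have hdetA : IsUnit A.det := (Matrix.isUnit_iff_isUnit_det A).mp hA
  set M := A.submatrix eR eC with hM
  set Nm := A⁻¹.submatrix eC eR with hNm
  have h1 : M * Nm = 1 := by
    rw [hM, hNm, Matrix.submatrix_mul_equiv, Matrix.mul_nonsing_inv A hdetA,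
      Matrix.submatrix_one_equiv]
  have hblock := jacobi_block M Nm h1
  have hL : (Matrix.of fun s t : Fin k =>
      A (R.orderEmbOfFin hR s) (C.orderEmbOfFin hC t)) = M.toBlocks₁₁ := rfl
  have hRR : (Matrix.of fun s t : Fin (n - k) =>
      A⁻¹ (Cᶜ.orderEmbOfFin (by rw [Finset.card_compl, hC, Fintype.card_fin]) s)
          (Rᶜ.orderEmbOfFin (by rw [Finset.card_compl, hR, Fintype.card_fin]) t))
      = Nm.toBlocks₂₂ := rfl
  rw [hL, hRR, hblock]
  -- remains: det M = A.det * (-1)^E   (times the common factor)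
  have hMeq : M = (A.submatrix (permOf R hR hRc hkm) (permOf C hC hCc hkm)).submatrix
      (finSumFinEquiv.trans (finCongr hkm)) (finSumFinEquiv.trans (finCongr hkm)) := by
    ext i j
    simp [hM, permOf, heR, heC, Matrix.submatrix_apply, Equiv.symm_apply_apply]
  have hdetM : M.det = (((Equiv.Perm.sign (permOf R hR hRc hkm) : ℤ) : ℂ)) *
      (((Equiv.Perm.sign (permOf C hC hCc hkm) : ℤ) : ℂ)) * A.det := by
    rw [hMeq, Matrix.det_submatrix_equiv_self]
    have hsplit : A.submatrix (permOf R hR hRc hkm) (permOf C hC hCc hkm)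
        = (A.submatrix id (permOf C hC hCc hkm)).submatrix (permOf R hR hRc hkm) id := rfl
    rw [hsplit, Matrix.det_permute, Matrix.det_permute']
    ring
  rw [hdetM]
  have hsR := sign_permOf hkm (∑ j ∈ R, (j : ℕ)) R hR hRc rfl
  have hsC := sign_permOf hkm (∑ j ∈ C, (j : ℕ)) C hC hCc rfl
  rw [hsR, hsC]
  set t := k * (k - 1) / 2
  have hE : (∑ i ∈ C, ((i : ℕ) + 1) + ∑ j ∈ R, ((j : ℕ) + 1))
      = (∑ i ∈ C, (i : ℕ)) + (∑ j ∈ R, (j : ℕ)) + 2 * k := by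
    rw [Finset.sum_add_distrib, Finset.sum_add_distrib]
    simp [hR, hC]
    ring
  rw [hE]
  push_cast
  rw [pow_add, pow_add, pow_mul, neg_one_sq, one_pow]
  have h2t : ((-1 : ℂ)) ^ t * ((-1 : ℂ)) ^ t = 1 := by
    rw [← pow_add]; exact Even.neg_one_pow ⟨t, rfl⟩
  linear_combination ((-1 : ℂ) ^ (∑ j ∈ R, (j : ℕ)) * (-1 : ℂ) ^ (∑ j ∈ C, (j : ℕ)) *
    A.det * Nm.toBlocks₂₂.det) * h2t
end

section
/- Let B ⊆ ℤᴺ be a lattice, γ ∈ ℤᴺ, and let b ∈ B with decomposition b = b₊ − b₋ into coordinatewise-nonnegative vectors with disjoint supports. Then the Γ-series 𝓕_γ(z) = Σ_{c∈B} z^{c+γ}/(c+γ)! satisfies the binomial (GKZ) equation (∂^{b₊} − ∂^{b₋}) 𝓕_γ = 0, where ∂^m = Πᵢ (∂/∂zᵢ)^{mᵢ}. -/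
open scoped Classical

/-- The binomial (GKZ) equation (∂^{b₊} − ∂^{b₋})𝓕_γ = 0 for b = b₊ − b₋ ∈ B with
coordinatewise-nonnegative b₊, b₋ of disjoint supports. Coefficientwise: the coefficient of
z^m in ∂^{u}𝓕_γ is ((m+u)!/m!)·F(m+u), where F(m) = 1/m! if m − γ ∈ B and 0 otherwise
is the coefficient function of 𝓕_γ; the claim is that these agree for u = b₊ and u = b₋. -/
theorem stmt10 (N : ℕ) (B : AddSubgroup (Fin N → ℤ)) (γ : Fin N → ℤ)
    (bp bm : Fin N → ℕ) (hdisj : ∀ i, bp i = 0 ∨ bm i = 0)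
    (hb : (fun i => (bp i : ℤ) - (bm i : ℤ)) ∈ B)
    (F : (Fin N → ℕ) → ℚ)
    (hF : ∀ m, F m =
      if (fun i => (m i : ℤ) - γ i) ∈ B then (∏ i, ((m i).factorial : ℚ))⁻¹ else 0) :
    ∀ m : Fin N → ℕ,
      (∏ i, (((m i + bp i).factorial : ℚ) / ((m i).factorial : ℚ))) * F (fun i => m i + bp i)
        = (∏ i, (((m i + bm i).factorial : ℚ) / ((m i).factorial : ℚ))) * F (fun i => m i + bm i) := by
  intro m
  have key : ((fun i => ((m i + bp i : ℕ) : ℤ) - γ i) ∈ B) ↔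
      ((fun i => ((m i + bm i : ℕ) : ℤ) - γ i) ∈ B) := by
    constructor
    · intro h
      have := B.sub_mem h hb
      convert this using 1
      funext i; simp only [Pi.sub_apply, Pi.add_apply]; push_cast; ring
    · intro h
      have := B.add_mem h hb
      convert this using 1
      funext i; simp only [Pi.sub_apply, Pi.add_apply]; push_cast; ring
  have simp_u : ∀ u : Fin N → ℕ,
      (∏ i, (((m i + u i).factorial : ℚ) / ((m i).factorial : ℚ))) *
        (∏ i, (((m i + u i).factorial : ℚ)))⁻¹ = (∏ i, ((m i).factorial : ℚ))⁻¹ := by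
    intro u
    rw [Finset.prod_div_distrib, div_mul_eq_mul_div, mul_inv_cancel₀, one_div]
    exact Finset.prod_ne_zero_iff.mpr fun i _ => Nat.cast_ne_zero.mpr (m i + u i).factorial_ne_zero
  rw [hF, hF]
  by_cases h : (fun i => ((m i + bp i : ℕ) : ℤ) - γ i) ∈ B
  · rw [if_pos h, if_pos (key.mp h), simp_u, simp_u]
  · rw [if_neg h, if_neg (fun h' => h (key.mpr h')), mul_zero, mul_zero]
end
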